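/- For every real number x ≥ -1/4, the double inequality √(x + 1/4) < Γ(x+1)/Γ(x+1/2) ≤ √(x + 1/4 + (Γ(3/4)/Γ(1/4))²) holds, where Γ denotes Euler's gamma function. -/

import Mathlib

open Real Filter Topology

/-!
Write `W x = Γ(x+1)/Γ(x+1/2)` and `ψ x = W x ^ 2 - x - 1/4`. The functional equation of `Γ`
gives `ψ x = 1/(16(x+1)²) + q x * ψ (x+1)` with `q x = ((x+1/2)/(x+1))² = W x ^ 2 / W (x+1) ^ 2`.
This yields a maximum principle: if `d y ≤ q y * d (y+1)` for `y ≥ x` and `d` is bounded above,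
then `d / W²` is nondecreasing along `x + ℕ` and, since log-convexity of `Γ` gives
`W y ^ 2 ≥ y`, is `O(1/(x+n))` there, so `d x ≤ 0`. Applied to `-ψ`, to `ψ y - 1/(16(y+1/2))`
and to `ψ (y+h) - ψ y`, it shows that `ψ` is positive and decreasing on `(-1/2, ∞)`; both
bounds follow, as `ψ (-1/4) = (Γ(3/4)/Γ(1/4))²`.
-/

noncomputable def gammaRatio (x : ℝ) : ℝ := Gamma (x + 1) / Gamma (x + 1 / 2)

noncomputable def gammaRatioDefect (x : ℝ) : ℝ := gammaRatio x ^ 2 - x - 1 / 4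

theorem Real.Gamma_add_half_sq_le_Gamma_mul_Gamma_add_one {a : ℝ} (ha : 0 < a) :
    Gamma (a + 1 / 2) ^ 2 ≤ Gamma a * Gamma (a + 1) := by
  have hconv := Gamma_mul_add_mul_le_rpow_Gamma_mul_rpow_Gamma ha (by linarith : 0 < a + 1)
    (by norm_num : (0 : ℝ) < 1 / 2) (by norm_num : (0 : ℝ) < 1 / 2) (by norm_num)
  rw [show 1 / 2 * a + 1 / 2 * (a + 1) = a + 1 / 2 by ring, ← mul_rpow (Gamma_pos_of_pos ha).le
    (Gamma_pos_of_pos (by linarith)).le, ← sqrt_eq_rpow] at hconv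
  calc Gamma (a + 1 / 2) ^ 2 ≤ √(Gamma a * Gamma (a + 1)) ^ 2 :=
        pow_le_pow_left₀ (Gamma_pos_of_pos (by linarith)).le hconv 2
    _ = Gamma a * Gamma (a + 1) :=
        sq_sqrt (mul_pos (Gamma_pos_of_pos ha) (Gamma_pos_of_pos (by linarith))).le

section

variable {x : ℝ}

theorem gammaRatio_pos (hx : -(1 / 2) < x) : 0 < gammaRatio x :=
  div_pos (Gamma_pos_of_pos (by linarith)) (Gamma_pos_of_pos (by linarith))

theorem gammaRatio_add_one (hx : -(1 / 2) < x) :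
    gammaRatio (x + 1) = (x + 1) / (x + 1 / 2) * gammaRatio x := by
  have hx₁ : x + 1 ≠ 0 := by linarith
  have hx₂ : x + 1 / 2 ≠ 0 := by linarith
  rw [gammaRatio, gammaRatio, Gamma_add_one hx₁, show x + 1 + 1 / 2 = x + 1 / 2 + 1 by ring,
    Gamma_add_one hx₂]
  field_simp

theorem sq_div_mul_gammaRatio_add_one_sq (hx : -(1 / 2) < x) :
    ((x + 1 / 2) / (x + 1)) ^ 2 * gammaRatio (x + 1) ^ 2 = gammaRatio x ^ 2 := by
  have hx₁ : x + 1 ≠ 0 := by linarith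
  have hx₂ : x + 1 / 2 ≠ 0 := by linarith
  rw [gammaRatio_add_one hx, ← mul_pow, ← mul_assoc, div_mul_div_comm, mul_comm (x + 1 / 2),
    div_self (mul_ne_zero hx₁ hx₂), one_mul]

theorem le_gammaRatio_sq (x : ℝ) : x ≤ gammaRatio x ^ 2 := by
  rcases le_or_gt x 0 with hx₀ | hx₀
  · exact hx₀.trans (sq_nonneg _)
  · have hlogconv := Gamma_add_half_sq_le_Gamma_mul_Gamma_add_one hx₀
    have hΓ : 0 < Gamma (x + 1 / 2) := Gamma_pos_of_pos (by linarith)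
    rw [Gamma_add_one hx₀.ne'] at hlogconv
    rw [gammaRatio, div_pow, le_div_iff₀ (by positivity), Gamma_add_one hx₀.ne']
    nlinarith [mul_le_mul_of_nonneg_left hlogconv hx₀.le]

theorem gammaRatio_sq_le (hx : -(1 / 2) < x) : gammaRatio x ^ 2 ≤ x + 1 / 2 := by
  have hx₀ : 0 < x + 1 / 2 := by linarith
  have hlogconv := Gamma_add_half_sq_le_Gamma_mul_Gamma_add_one hx₀
  rw [show x + 1 / 2 + 1 / 2 = x + 1 by ring, Gamma_add_one hx₀.ne'] at hlogconv
  have hΓ : 0 < Gamma (x + 1 / 2) := Gamma_pos_of_pos hx₀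
  rw [gammaRatio, div_pow, div_le_iff₀ (by positivity)]
  nlinarith

theorem gammaRatioDefect_eq (hx : -(1 / 2) < x) :
    gammaRatioDefect x =
      1 / (16 * (x + 1) ^ 2) + ((x + 1 / 2) / (x + 1)) ^ 2 * gammaRatioDefect (x + 1) := by
  have hx₁ : x + 1 ≠ 0 := by linarith
  have hx₂ : x + 1 / 2 ≠ 0 := by linarith
  rw [gammaRatioDefect, gammaRatioDefect, mul_sub, mul_sub, sq_div_mul_gammaRatio_add_one_sq hx]
  field_simp
  ring

theorem neg_quarter_le_gammaRatioDefect (x : ℝ) : -(1 / 4) ≤ gammaRatioDefect x := by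
  unfold gammaRatioDefect
  linarith [le_gammaRatio_sq x]

theorem gammaRatioDefect_le_quarter (hx : -(1 / 2) < x) : gammaRatioDefect x ≤ 1 / 4 := by
  unfold gammaRatioDefect
  linarith [gammaRatio_sq_le hx]

theorem nonpos_of_le_sq_div_mul_add_one {d : ℝ → ℝ} {M : ℝ} (hx : -(1 / 2) < x)
    (hstep : ∀ y, x ≤ y → d y ≤ ((y + 1 / 2) / (y + 1)) ^ 2 * d (y + 1))
    (hbdd : ∀ y, x ≤ y → d y ≤ M) : d x ≤ 0 := by
  set e : ℝ → ℝ := fun y => d y / gammaRatio y ^ 2 with he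
  have he_step : ∀ y, x ≤ y → e y ≤ e (y + 1) := by
    intro y hy
    have hy' : -(1 / 2) < y := hx.trans_le hy
    have hq : 0 < ((y + 1 / 2) / (y + 1)) ^ 2 := by
      have : 0 < y + 1 / 2 := by linarith
      have : 0 < y + 1 := by linarith
      positivity
    calc e y ≤ ((y + 1 / 2) / (y + 1)) ^ 2 * d (y + 1) / gammaRatio y ^ 2 :=
          div_le_div_of_nonneg_right (hstep y hy) (sq_nonneg _)
      _ = e (y + 1) := by
          rw [he, ← sq_div_mul_gammaRatio_add_one_sq hy', mul_div_mul_left _ _ hq.ne']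
  have he_mono : ∀ n : ℕ, e x ≤ e (x + n) := by
    intro n
    induction n with
    | zero => simp
    | succ n ih =>
      rw [Nat.cast_succ, ← add_assoc]
      exact ih.trans (he_step _ (le_add_of_nonneg_right n.cast_nonneg))
  have he_tail : ∀ n : ℕ, 1 ≤ n → e (x + n) ≤ max M 0 / (x + n) := by
    intro n hn
    have hxn : 0 < x + n := by
      have : (1 : ℝ) ≤ n := by exact_mod_cast hn
      linarith
    exact div_le_div₀ (le_max_right _ _)
      ((hbdd _ (le_add_of_nonneg_right n.cast_nonneg)).trans (le_max_left _ _)) hxn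
      (le_gammaRatio_sq _)
  have hlim : Tendsto (fun n : ℕ => max M 0 / (x + n)) atTop (𝓝 0) :=
    tendsto_const_nhds.div_atTop (tendsto_atTop_add_const_left _ _ tendsto_natCast_atTop_atTop)
  have hex : d x / gammaRatio x ^ 2 ≤ 0 := ge_of_tendsto hlim
    (eventually_atTop.2 ⟨1, fun n hn => (he_mono n).trans (he_tail n hn)⟩)
  have hW := gammaRatio_pos hx
  simpa using (div_le_iff₀ (by positivity)).1 hex

theorem gammaRatioDefect_nonneg (hx : -(1 / 2) < x) : 0 ≤ gammaRatioDefect x := by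
  have := nonpos_of_le_sq_div_mul_add_one (d := fun y => -gammaRatioDefect y) (M := 1 / 4) hx
    (fun y hy => by
      have hrec := gammaRatioDefect_eq (hx.trans_le hy)
      have hT : 0 ≤ 1 / (16 * (y + 1) ^ 2) := by positivity
      linarith)
    (fun y _ => by linarith [neg_quarter_le_gammaRatioDefect y])
  linarith

theorem gammaRatioDefect_pos (hx : -(1 / 2) < x) : 0 < gammaRatioDefect x := by
  have hx₁ : 0 < x + 1 := by linarith
  rw [gammaRatioDefect_eq hx]
  have := gammaRatioDefect_nonneg (show -(1 / 2) < x + 1 by linarith)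
  positivity

theorem gammaRatioDefect_le (hx : -(1 / 2) < x) :
    gammaRatioDefect x ≤ 1 / (16 * (x + 1 / 2)) := by
  have := nonpos_of_le_sq_div_mul_add_one
    (d := fun y => gammaRatioDefect y - 1 / (16 * (y + 1 / 2))) (M := 1 / 4) hx
    (fun y hy => by
      have hy' : -(1 / 2) < y := hx.trans_le hy
      have hsuper : 1 / (16 * (y + 1) ^ 2) +
          ((y + 1 / 2) / (y + 1)) ^ 2 * (1 / (16 * (y + 1 + 1 / 2))) ≤
            1 / (16 * (y + 1 / 2)) := by
        have h₁ : 0 < y + 1 / 2 := by linarith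
        have h₂ : 0 < y + 1 := by linarith
        have h₃ : 0 < y + 1 + 1 / 2 := by linarith
        rw [div_pow, div_mul_div_comm, mul_one, div_add_div _ _ (by positivity) (by positivity),
          div_le_div_iff₀ (by positivity) (by positivity)]
        nlinarith [mul_pos h₁ h₁, pow_pos h₁ 3, pow_pos h₁ 4]
      have hrec := gammaRatioDefect_eq hy'
      linarith)
    (fun y hy => by
      have : 0 < y + 1 / 2 := by linarith [hx.trans_le hy]
      have : 0 ≤ 1 / (16 * (y + 1 / 2)) := by positivity
      linarith [gammaRatioDefect_le_quarter (hx.trans_le hy)])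
  linarith

theorem sq_div_add_one_le_sq_div_add_one {y z : ℝ} (hy : -(1 / 2) < y) (hyz : y ≤ z) :
    ((y + 1 / 2) / (y + 1)) ^ 2 ≤ ((z + 1 / 2) / (z + 1)) ^ 2 := by
  have hy₁ : 0 < y + 1 := by linarith
  have hz₁ : 0 < z + 1 := by linarith
  refine pow_le_pow_left₀ (div_nonneg (by linarith) hy₁.le) ?_ 2
  rw [div_le_div_iff₀ hy₁ hz₁]
  linarith

theorem sq_div_add_one_sub_mul_le {y z : ℝ} (hy : -(1 / 2) < y) (hyz : y ≤ z) :
    (((z + 1 / 2) / (z + 1)) ^ 2 - ((y + 1 / 2) / (y + 1)) ^ 2) * (1 / (16 * (z + 1 + 1 / 2)))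
      ≤ 1 / (16 * (y + 1) ^ 2) - 1 / (16 * (z + 1) ^ 2) := by
  have hy₁ : 0 < y + 1 := by linarith
  have hz₁ : 0 < z + 1 := by linarith
  have hz₂ : 0 < z + 1 + 1 / 2 := by linarith
  rw [← sub_nonneg]
  have key : 1 / (16 * (y + 1) ^ 2) - 1 / (16 * (z + 1) ^ 2) -
      (((z + 1 / 2) / (z + 1)) ^ 2 - ((y + 1 / 2) / (y + 1)) ^ 2) * (1 / (16 * (z + 1 + 1 / 2))) =
      (z - y) * (2 * (z + 1) ^ 2 + 3 / 2 * (y + 1) + 3 / 2 * (z + 1)) /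
        (32 * (y + 1) ^ 2 * (z + 1) ^ 2 * (z + 1 + 1 / 2)) := by
    field_simp
    ring
  rw [key]
  have : 0 ≤ z - y := by linarith
  positivity

theorem gammaRatioDefect_antitoneOn : AntitoneOn gammaRatioDefect (Set.Ioi (-(1 / 2))) := by
  intro x hx z _ hxz
  have := nonpos_of_le_sq_div_mul_add_one
    (d := fun y => gammaRatioDefect (y + (z - x)) - gammaRatioDefect y) (M := 1 / 2) hx
    (fun y hy => by
      have hy' : -(1 / 2) < y := hx.trans_le hy
      have hyz : y ≤ y + (z - x) := by linarith
      have hyz' : -(1 / 2) < y + (z - x) := by linarith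
      have hrec := gammaRatioDefect_eq hy'
      have hrec' := gammaRatioDefect_eq hyz'
      have hψ := gammaRatioDefect_le (show -(1 / 2) < y + (z - x) + 1 by linarith)
      have hq := sq_div_add_one_le_sq_div_add_one hy' hyz
      have hcross := sq_div_add_one_sub_mul_le hy' hyz
      rw [show y + 1 + (z - x) = y + (z - x) + 1 by ring]
      linarith [mul_le_mul_of_nonneg_left hψ (sub_nonneg.2 hq)])
    (fun y hy => by
      linarith [gammaRatioDefect_le_quarter (show -(1 / 2) < y + (z - x) by
          linarith [hx.trans_le hy]),
        neg_quarter_le_gammaRatioDefect y])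
  simp only [add_sub_cancel] at this
  linarith

end

theorem watson_double_inequality (x : ℝ) (hx : -(1 / 4) ≤ x) :
    Real.sqrt (x + 1 / 4) < Gamma (x + 1) / Gamma (x + 1 / 2) ∧
      Gamma (x + 1) / Gamma (x + 1 / 2) ≤
        Real.sqrt (x + 1 / 4 + (Gamma (3 / 4) / Gamma (1 / 4)) ^ 2) := by
  have hx' : -(1 / 2) < x := by linarith
  have hψ_pos : 0 < gammaRatioDefect x := gammaRatioDefect_pos hx'
  have hψ_le : gammaRatioDefect x ≤ gammaRatioDefect (-(1 / 4)) :=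
    gammaRatioDefect_antitoneOn (by norm_num) (Set.mem_Ioi.2 hx') hx
  have hψ_end : gammaRatioDefect (-(1 / 4)) = (Gamma (3 / 4) / Gamma (1 / 4)) ^ 2 := by
    norm_num [gammaRatioDefect, gammaRatio]
  rw [hψ_end, gammaRatioDefect] at hψ_le
  rw [gammaRatioDefect] at hψ_pos
  change √(x + 1 / 4) < gammaRatio x ∧ gammaRatio x ≤ √(x + 1 / 4 + _)
  exact ⟨(sqrt_lt' (gammaRatio_pos hx')).2 (by linarith), le_sqrt_of_sq_le (by linarith)⟩
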